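/- For any subset X of S, the map p ↦ (p restricted to X, p restricted to S \ X) is an order isomorphism from the Prikry product order 𝑃_S onto the product order (𝑃_S ↾ X) × (𝑃_S ↾ (S \ X)), where 𝑃_S ↾ Y = {p ∈ 𝑃_S : X^p ⊆ Y} and the restriction of p to Y is (X^p ∩ Y, S^p ↾ Y, H^p ↾ Y). -/

import Mathlib

/-- A (raw) condition in the class Prikry product: a domain `X`, finite stems `Sf α ⊆ α`,
and measure-one sets `H α`. -/
structure PCond where
  X : Set Ordinal
  Sf : Ordinal → Finset Ordinal
  H : Ordinal → Set Ordinal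

/-- `p` is a condition of the Prikry product `𝑃_S` with measures `U`. -/
def IsCond (S : Set Ordinal) (U : Ordinal → Set (Set Ordinal)) (p : PCond) : Prop :=
  p.X ⊆ S ∧
  (∀ α ∈ p.X, ∀ β ∈ p.Sf α, β < α) ∧
  (∀ α ∈ p.X, p.H α ∈ U α) ∧
  {α | p.Sf α ≠ ∅}.Finite ∧
  (∀ α ∈ p.X, ∀ β ∈ p.Sf α, ∀ γ ∈ p.H α, β < γ) ∧
  (∀ α ∉ p.X, p.Sf α = ∅ ∧ p.H α = ∅)

/-- `t` end-extends `s`: `s ⊆ t` and every new element lies above all of `s`. -/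
def EndExt (t s : Finset Ordinal) : Prop :=
  s ⊆ t ∧ ∀ β ∈ t, β ∉ s → ∀ γ ∈ s, γ < β

/-- The extension relation of the Prikry product. -/
def PLe (p q : PCond) : Prop :=
  q.X ⊆ p.X ∧
  (∀ α ∈ q.X, EndExt (p.Sf α) (q.Sf α)) ∧
  (∀ α ∈ q.X, ∀ β ∈ p.Sf α, β ∉ q.Sf α → β ∈ q.H α) ∧
  (∀ α ∈ q.X, p.H α ⊆ q.H α)

/-- The direct (Prikry) extension relation of the Prikry product. -/
def PLeStar (p q : PCond) : Prop :=
  q.X ⊆ p.X ∧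
  (∀ α ∈ q.X, p.Sf α = q.Sf α) ∧
  (∀ α ∈ q.X, p.H α ⊆ q.H α)

open Classical in
/-- The restriction of a condition `p` to a set `Y`. -/
noncomputable def restrict (p : PCond) (Y : Set Ordinal) : PCond where
  X := p.X ∩ Y
  Sf := fun α => if α ∈ Y then p.Sf α else ∅
  H := fun α => if α ∈ Y then p.H α else ∅

/-!
Everything about a condition of the Prikry product is local to a coordinate `α`: being a
condition is a conjunction of per-coordinate requirements plus finiteness of the support, and
`p ≤ q` holds iff it holds at every `α ∈ X^q`. Splitting the coordinates into `X` and `S \ X`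
therefore splits both the conditions and the order, and the inverse of
`p ↦ (p ↾ X, p ↾ (S \ X))` glues a pair back together coordinatewise.
-/

namespace PCond

theorem ext {p q : PCond} (hX : p.X = q.X) (hSf : p.Sf = q.Sf) (hH : p.H = q.H) : p = q := by
  cases p; cases q; simp_all

def IsSupported (p : PCond) : Prop :=
  ∀ α ∉ p.X, p.Sf α = ∅ ∧ p.H α = ∅

open Classical in
noncomputable def glue (Y : Set Ordinal) (q r : PCond) : PCond where
  X := q.X ∪ r.X
  Sf := fun α => if α ∈ Y then q.Sf α else r.Sf α
  H := fun α => if α ∈ Y then q.H α else r.H α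

def PLeAt (p q : PCond) (α : Ordinal) : Prop :=
  α ∈ p.X ∧ EndExt (p.Sf α) (q.Sf α) ∧ (∀ β ∈ p.Sf α, β ∉ q.Sf α → β ∈ q.H α) ∧
    p.H α ⊆ q.H α

end PCond

open PCond

section

variable {S : Set Ordinal} {U : Ordinal → Set (Set Ordinal)} {p q r : PCond}
  {Y Z : Set Ordinal} {α : Ordinal}

theorem IsCond.isSupported (hp : IsCond S U p) : p.IsSupported := hp.2.2.2.2.2

@[simp]
theorem restrict_X : (restrict p Y).X = p.X ∩ Y := rfl

@[simp]
theorem restrict_Sf_of_mem (h : α ∈ Y) : (restrict p Y).Sf α = p.Sf α := if_pos h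

@[simp]
theorem restrict_H_of_mem (h : α ∈ Y) : (restrict p Y).H α = p.H α := if_pos h

@[simp]
theorem restrict_Sf_of_notMem (h : α ∉ Y) : (restrict p Y).Sf α = ∅ := if_neg h

@[simp]
theorem restrict_H_of_notMem (h : α ∉ Y) : (restrict p Y).H α = ∅ := if_neg h

@[simp]
theorem glue_X : (glue Y q r).X = q.X ∪ r.X := rfl

@[simp]
theorem glue_Sf_of_mem (h : α ∈ Y) : (glue Y q r).Sf α = q.Sf α := if_pos h

@[simp]
theorem glue_H_of_mem (h : α ∈ Y) : (glue Y q r).H α = q.H α := if_pos h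

@[simp]
theorem glue_Sf_of_notMem (h : α ∉ Y) : (glue Y q r).Sf α = r.Sf α := if_neg h

@[simp]
theorem glue_H_of_notMem (h : α ∉ Y) : (glue Y q r).H α = r.H α := if_neg h

theorem isCond_restrict (hp : IsCond S U p) (Y : Set Ordinal) : IsCond S U (restrict p Y) := by
  obtain ⟨hS, hlt, hU, hfin, hstem, hsupp⟩ := hp
  refine ⟨Set.inter_subset_left.trans hS, ?_, ?_, hfin.subset ?_, ?_, ?_⟩
  · rintro α ⟨hα, hαY⟩
    simpa [hαY] using hlt α hα
  · rintro α ⟨hα, hαY⟩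
    simpa [hαY] using hU α hα
  · intro α hα
    by_cases hαY : α ∈ Y <;> simp_all
  · rintro α ⟨hα, hαY⟩
    simpa [hαY] using hstem α hα
  · intro α hα
    by_cases hαY : α ∈ Y
    · simpa [hαY] using hsupp α (by simp_all)
    · simp [hαY]

theorem isCond_glue (hq : IsCond S U q) (hr : IsCond S U r) (hqY : q.X ⊆ Y)
    (hrY : Disjoint r.X Y) : IsCond S U (glue Y q r) := by
  obtain ⟨hqS, hqlt, hqU, hqfin, hqstem, hqsupp⟩ := hq
  obtain ⟨hrS, hrlt, hrU, hrfin, hrstem, hrsupp⟩ := hr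
  have hr' : ∀ α ∈ r.X, α ∉ Y := fun α hα hαY => hrY.notMem_of_mem_left hα hαY
  refine ⟨Set.union_subset hqS hrS, ?_, ?_, (hqfin.union hrfin).subset ?_, ?_, ?_⟩
  · rintro α (hα | hα)
    · simpa [hqY hα] using hqlt α hα
    · simpa [hr' α hα] using hrlt α hα
  · rintro α (hα | hα)
    · simpa [hqY hα] using hqU α hα
    · simpa [hr' α hα] using hrU α hα
  · intro α hα
    by_cases hαY : α ∈ Y <;> simp_all
  · rintro α (hα | hα)
    · simpa [hqY hα] using hqstem α hα
    · simpa [hr' α hα] using hrstem α hα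
  · intro α hα
    rw [glue_X, Set.mem_union, not_or] at hα
    by_cases hαY : α ∈ Y
    · simpa [hαY] using hqsupp α hα.1
    · simpa [hαY] using hrsupp α hα.2

theorem restrict_glue_left (hq : q.IsSupported) (hqY : q.X ⊆ Y) (hrY : Disjoint r.X Y) :
    restrict (glue Y q r) Y = q := by
  refine PCond.ext ?_ (funext fun α => ?_) (funext fun α => ?_)
  · rw [restrict_X, glue_X, Set.union_inter_distrib_right, Set.inter_eq_left.2 hqY,
      hrY.inter_eq, Set.union_empty]
  all_goals
    by_cases hαY : α ∈ Y
    · simp [hαY]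
    · simp [hαY, hq α fun hα => hαY (hqY hα)]

theorem restrict_glue_right (hr : r.IsSupported) (hqY : q.X ⊆ Y) (hrZ : r.X ⊆ Z)
    (hYZ : Disjoint Y Z) : restrict (glue Y q r) Z = r := by
  refine PCond.ext ?_ (funext fun α => ?_) (funext fun α => ?_)
  · rw [restrict_X, glue_X, Set.union_inter_distrib_right, Set.inter_eq_left.2 hrZ,
      (hYZ.mono_left hqY).inter_eq, Set.empty_union]
  all_goals
    by_cases hαZ : α ∈ Z
    · simp [hαZ, hYZ.notMem_of_mem_right hαZ]
    · simp [hαZ, hr α fun hα => hαZ (hrZ hα)]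

theorem glue_restrict_restrict (hp : p.IsSupported) (hpYZ : p.X ⊆ Y ∪ Z) :
    glue Y (restrict p Y) (restrict p Z) = p := by
  refine PCond.ext ?_ (funext fun α => ?_) (funext fun α => ?_)
  · rw [glue_X, restrict_X, restrict_X, ← Set.inter_union_distrib_left, Set.inter_eq_left.2 hpYZ]
  all_goals
    by_cases hαY : α ∈ Y
    · simp [hαY]
    by_cases hαZ : α ∈ Z
    · simp [hαY, hαZ]
    · simp [hαY, hαZ, hp α fun hα => (hpYZ hα).elim hαY hαZ]

theorem pLe_iff_forall_pLeAt : PLe p q ↔ ∀ α ∈ q.X, PLeAt p q α := by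
  simp only [PLe, PLeAt, Set.subset_def, ← forall_and]

theorem pLeAt_restrict (hα : α ∈ Y) : PLeAt (restrict p Y) (restrict q Y) α ↔ PLeAt p q α := by
  simp [PLeAt, hα]

theorem pLe_restrict_iff :
    PLe (restrict p Y) (restrict q Y) ↔ ∀ α ∈ q.X ∩ Y, PLeAt p q α := by
  rw [pLe_iff_forall_pLeAt, restrict_X]
  exact forall₂_congr fun α hα => pLeAt_restrict hα.2

end

theorem stmt12_general (S : Set Ordinal) (U : Ordinal → Set (Set Ordinal)) (X : Set Ordinal) :
    Set.BijOn (fun p => (restrict p X, restrict p (S \ X)))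
      {p | IsCond S U p}
      ({q | IsCond S U q ∧ q.X ⊆ X} ×ˢ {r | IsCond S U r ∧ r.X ⊆ S \ X}) ∧
    (∀ p q : PCond, IsCond S U p → IsCond S U q →
      (PLe p q ↔ (PLe (restrict p X) (restrict q X) ∧
        PLe (restrict p (S \ X)) (restrict q (S \ X))))) := by
  have hsplit : S ⊆ X ∪ S \ X := by simp
  refine ⟨Set.InvOn.bijOn (f' := fun qr => glue X qr.1 qr.2) ⟨?_, ?_⟩ ?_ ?_,
    fun p q _ hq => ?_⟩
  · intro p hp
    exact glue_restrict_restrict hp.isSupported (hp.1.trans hsplit)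
  · rintro ⟨q, r⟩ ⟨⟨hq, hqX⟩, hr, hrX⟩
    exact Prod.ext (restrict_glue_left hq.isSupported hqX (Set.disjoint_of_subset_left hrX
        Set.disjoint_sdiff_left))
      (restrict_glue_right hr.isSupported hqX hrX Set.disjoint_sdiff_right)
  · intro p hp
    exact ⟨⟨isCond_restrict hp X, Set.inter_subset_right⟩,
      isCond_restrict hp (S \ X), Set.inter_subset_right⟩
  · rintro ⟨q, r⟩ ⟨⟨hq, hqX⟩, hr, hrX⟩
    exact isCond_glue hq hr hqX (Set.disjoint_of_subset_left hrX Set.disjoint_sdiff_left)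
  · rw [pLe_iff_forall_pLeAt, pLe_restrict_iff, pLe_restrict_iff, ← forall_and]
    refine forall_congr' fun α => ⟨fun h => ⟨fun hα => h hα.1, fun hα => h hα.1⟩, ?_⟩
    rintro ⟨hX, hSX⟩ hα
    exact (hsplit (hq.1 hα)).elim (fun h => hX ⟨hα, h⟩) (fun h => hSX ⟨hα, h⟩)

/-- For any `X ⊆ S`, the map `p ↦ (p ↾ X, p ↾ (S \ X))` is an order isomorphism from
`𝑃_S` onto `(𝑃_S ↾ X) × (𝑃_S ↾ (S \ X))`, ordered coordinatewise. -/
theorem stmt12 (S : Set Ordinal) (U : Ordinal → Set (Set Ordinal)) (X : Set Ordinal)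
    (hX : X ⊆ S) :
    Set.BijOn (fun p => (restrict p X, restrict p (S \ X)))
      {p | IsCond S U p}
      ({q | IsCond S U q ∧ q.X ⊆ X} ×ˢ {r | IsCond S U r ∧ r.X ⊆ S \ X}) ∧
    (∀ p q : PCond, IsCond S U p → IsCond S U q →
      (PLe p q ↔ (PLe (restrict p X) (restrict q X) ∧
        PLe (restrict p (S \ X)) (restrict q (S \ X))))) :=
  stmt12_general S U X
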